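/- Let (S,T),(U,V) be a twin cotorsion pair on B and B ∈ B. Construct b⁺ : B → B⁺ via the push-out of the approximation sequences V_B ↣ U_B ↠ B and U_B ↣ T^U ↠ S^U. Then for any Y ∈ B⁺, the map Hom(B⁺, Y) → Hom(B, Y) induced by b⁺ is surjective, and the induced map on the quotient category B/W is bijective. -/

import Mathlib

open CategoryTheory Limits

universe v u

/-- An exact structure (Quillen exact category) on an additive category `C`:
a class of kernel-cokernel pairs (short exact sequences) satisfying Quillen's axioms. -/
structure ExactStructure (C : Type u) [Category.{v} C] [Preadditive C] where
  ses : ∀ ⦃X Y Z : C⦄, (X ⟶ Y) → (Y ⟶ Z) → Prop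
  comp_zero : ∀ ⦃X Y Z : C⦄ ⦃i : X ⟶ Y⦄ ⦃d : Y ⟶ Z⦄, ses i d → i ≫ d = 0
  is_kernel : ∀ ⦃X Y Z : C⦄ ⦃i : X ⟶ Y⦄ ⦃d : Y ⟶ Z⦄, ses i d →
    ∀ ⦃W : C⦄ (g : W ⟶ Y), g ≫ d = 0 → ∃! h : W ⟶ X, h ≫ i = g
  is_cokernel : ∀ ⦃X Y Z : C⦄ ⦃i : X ⟶ Y⦄ ⦃d : Y ⟶ Z⦄, ses i d →
    ∀ ⦃W : C⦄ (g : Y ⟶ W), i ≫ g = 0 → ∃! h : Z ⟶ W, d ≫ h = g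
  id_infl : ∀ X : C, ∃ (Z : C) (d : X ⟶ Z), ses (𝟙 X) d
  id_defl : ∀ X : C, ∃ (W : C) (i : W ⟶ X), ses i (𝟙 X)
  infl_comp : ∀ ⦃X Y Z : C⦄ (i : X ⟶ Y) (j : Y ⟶ Z),
    (∃ (A : C) (d : Y ⟶ A), ses i d) → (∃ (B : C) (e : Z ⟶ B), ses j e) →
    ∃ (A : C) (d : Z ⟶ A), ses (i ≫ j) d
  defl_comp : ∀ ⦃X Y Z : C⦄ (p : X ⟶ Y) (q : Y ⟶ Z),
    (∃ (A : C) (i : A ⟶ X), ses i p) → (∃ (B : C) (j : B ⟶ Y), ses j q) →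
    ∃ (A : C) (i : A ⟶ X), ses i (p ≫ q)
  pullback_defl : ∀ ⦃X Y Z : C⦄ ⦃i : X ⟶ Y⦄ ⦃d : Y ⟶ Z⦄, ses i d → ∀ ⦃Z' : C⦄ (f : Z' ⟶ Z),
    ∃ (Y' : C) (d' : Y' ⟶ Z') (g : Y' ⟶ Y), (∃ (X' : C) (i' : X' ⟶ Y'), ses i' d') ∧
      IsPullback d' g f d
  pushout_infl : ∀ ⦃X Y Z : C⦄ ⦃i : X ⟶ Y⦄ ⦃d : Y ⟶ Z⦄, ses i d → ∀ ⦃X' : C⦄ (g : X ⟶ X'),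
    ∃ (Y' : C) (i' : X' ⟶ Y') (g' : Y ⟶ Y'), (∃ (Z' : C) (d' : Y' ⟶ Z'), ses i' d') ∧
      IsPushout i g g' i'

variable {C : Type u} [Category.{v} C] [Preadditive C] [HasBinaryBiproducts C]

/-- `i` is an inflation (admissible monomorphism). -/
def ExactStructure.Inflation (E : ExactStructure C) {X Y : C} (i : X ⟶ Y) : Prop :=
  ∃ (Z : C) (d : Y ⟶ Z), E.ses i d

/-- `d` is a deflation (admissible epimorphism). -/
def ExactStructure.Deflation (E : ExactStructure C) {Y Z : C} (d : Y ⟶ Z) : Prop :=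
  ∃ (X : C) (i : X ⟶ Y), E.ses i d

/-- `Ext^1(X, Y) = 0`: every short exact sequence `Y ↣ M ↠ X` splits. -/
def ExactStructure.Ext1Zero (E : ExactStructure C) (X Y : C) : Prop :=
  ∀ ⦃M : C⦄ (i : Y ⟶ M) (d : M ⟶ X), E.ses i d → ∃ r : M ⟶ Y, i ≫ r = 𝟙 Y

/-- `P` is projective with respect to the exact structure. -/
def ExactStructure.Proj (E : ExactStructure C) (P : C) : Prop :=
  ∀ ⦃Y Z : C⦄ (d : Y ⟶ Z), E.Deflation d → ∀ g : P ⟶ Z, ∃ h : P ⟶ Y, h ≫ d = g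

/-- `I` is injective with respect to the exact structure. -/
def ExactStructure.Inj (E : ExactStructure C) (I : C) : Prop :=
  ∀ ⦃X Y : C⦄ (i : X ⟶ Y), E.Inflation i → ∀ g : X ⟶ I, ∃ h : Y ⟶ I, i ≫ h = g

def ExactStructure.EnoughProj (E : ExactStructure C) : Prop :=
  ∀ X : C, ∃ (P : C) (p : P ⟶ X), E.Proj P ∧ E.Deflation p

def ExactStructure.EnoughInj (E : ExactStructure C) : Prop :=
  ∀ X : C, ∃ (I : C) (i : X ⟶ I), E.Inj I ∧ E.Inflation i

/-- A class of objects is closed under direct summands (retracts). -/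
def ClosedUnderSummands (U : Set C) : Prop :=
  ∀ ⦃X Y : C⦄ (s : Y ⟶ X) (r : X ⟶ Y), s ≫ r = 𝟙 Y → X ∈ U → Y ∈ U

/-- A cotorsion pair `(U, V)` on an exact category. -/
structure IsCotorsionPair (E : ExactStructure C) (U V : Set C) : Prop where
  ext1 : ∀ ⦃A B : C⦄, A ∈ U → B ∈ V → E.Ext1Zero A B
  approx_left : ∀ B : C, ∃ (VB UB : C) (i : VB ⟶ UB) (d : UB ⟶ B),
    VB ∈ V ∧ UB ∈ U ∧ E.ses i d
  approx_right : ∀ B : C, ∃ (VB UB : C) (i : B ⟶ VB) (d : VB ⟶ UB),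
    VB ∈ V ∧ UB ∈ U ∧ E.ses i d
  summands_left : ClosedUnderSummands U
  summands_right : ClosedUnderSummands V

/-- The subcategory `B⁺` of a twin cotorsion pair, where `W = T ∩ U`. -/
def BPlus (E : ExactStructure C) (V W : Set C) : Set C :=
  fun B => ∃ (V' W' : C) (i : V' ⟶ W') (d : W' ⟶ B), V' ∈ V ∧ W' ∈ W ∧ E.ses i d

/-- The subcategory `B⁻` of a twin cotorsion pair, where `W = T ∩ U`. -/
def BMinus (E : ExactStructure C) (W S : Set C) : Set C :=
  fun B => ∃ (W' S' : C) (i : B ⟶ W') (d : W' ⟶ S'), W' ∈ W ∧ S' ∈ S ∧ E.ses i d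

/-- `f` factors through an object of `W`. -/
def FactorsThru (W : Set C) {X Y : C} (f : X ⟶ Y) : Prop :=
  ∃ (Z : C) (u : X ⟶ Z) (v : Z ⟶ Y), Z ∈ W ∧ u ≫ v = f
/-!
Two vanishing conditions do all the work. `Ext¹(U, V) = 0` makes the deflation `W' ↠ Y`
presenting `Y ∈ B⁺` a right `U`-approximation, and `Ext¹(S, T) = 0` lets maps into objects of `T`
extend along inflations with cokernel in `S`; both follow by pulling back (pushing out) the given
sequence, whose kernel (cokernel) is a retract of the old one.

For surjectivity, lift `d ≫ y : U_B → Y` to `U_B → W'`, extend it along `u` to `T^U`, and glue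
with `y` over the push-out. For injectivity modulo `W`, if `b⁺ ≫ (q - q')` factors as `a ≫ b`
through `Z ∈ W`, extend `a` along `b⁺` to `a'`; the remainder `q - q' - a' ≫ b` vanishes on `B`,
so it factors through `S^U ∈ U` and hence lifts through `W'`. Thus `q - q'` factors through
`Z ⊞ W'`, which lies in `W` because both halves of a cotorsion pair are closed under biproducts.
-/

section

variable {𝒞 : Type*} [Category 𝒞] [Preadditive 𝒞]

namespace ExactStructure

variable (E : ExactStructure 𝒞) {N M P : 𝒞} {i : N ⟶ M} {d : M ⟶ P}

lemma mono_of_ses (h : E.ses i d) : Mono i where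
  right_cancellation g g' hg := by
    obtain ⟨_, -, huniq⟩ := E.is_kernel h (g ≫ i)
      (by rw [Category.assoc, E.comp_zero h, Limits.comp_zero])
    exact (huniq g rfl).trans (huniq g' hg.symm).symm

lemma epi_of_ses (h : E.ses i d) : Epi d where
  left_cancellation g g' hg := by
    obtain ⟨_, -, huniq⟩ := E.is_cokernel h (d ≫ g)
      (by rw [← Category.assoc, E.comp_zero h, zero_comp])
    exact (huniq g rfl).trans (huniq g' hg.symm).symm

lemma exists_section_of_retraction (h : E.ses i d) {r : M ⟶ N} (hr : i ≫ r = 𝟙 N) :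
    ∃ σ : P ⟶ M, σ ≫ d = 𝟙 P := by
  obtain ⟨σ, hσ, -⟩ := E.is_cokernel h (𝟙 M - r ≫ i) (by simp [reassoc_of% hr])
  refine ⟨σ, (E.epi_of_ses h).left_cancellation _ _ ?_⟩
  rw [reassoc_of% hσ, Preadditive.sub_comp, Category.assoc, E.comp_zero h]
  simp

lemma exists_retraction_of_section (h : E.ses i d) {σ : P ⟶ M} (hσ : σ ≫ d = 𝟙 P) :
    ∃ r : M ⟶ N, i ≫ r = 𝟙 N := by
  obtain ⟨r, hr, -⟩ := E.is_kernel h (𝟙 M - d ≫ σ) (by simp [hσ])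
  refine ⟨r, (E.mono_of_ses h).right_cancellation _ _ ?_⟩
  rw [Category.assoc, hr, Preadditive.comp_sub, ← Category.assoc, E.comp_zero h]
  simp

lemma exists_pullback_ses_kernel_retract (h : E.ses i d) {A : 𝒞} (f : A ⟶ P) :
    ∃ (M' N' : 𝒞) (j : N' ⟶ M') (d' : M' ⟶ A) (g : M' ⟶ M) (r : N' ⟶ N) (s : N ⟶ N'),
      E.ses j d' ∧ IsPullback d' g f d ∧ r ≫ s = 𝟙 N' := by
  obtain ⟨M', d', g, ⟨N', j, hj⟩, hpb⟩ := E.pullback_defl h f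
  have hw : (0 : N ⟶ A) ≫ f = i ≫ d := by rw [E.comp_zero h, zero_comp]
  obtain ⟨s, hs, -⟩ := E.is_kernel hj (hpb.lift 0 i hw) (hpb.lift_fst _ _ _)
  obtain ⟨r, hr, -⟩ := E.is_kernel h (j ≫ g)
    (by rw [Category.assoc, ← hpb.w, reassoc_of% E.comp_zero hj, zero_comp])
  refine ⟨M', N', j, d', g, r, s, hj, hpb, (E.mono_of_ses hj).right_cancellation _ _ ?_⟩
  apply hpb.hom_ext
  · simp [hs, E.comp_zero hj]
  · simp [hs, hr]

lemma exists_pushout_ses_cokernel_retract (h : E.ses i d) {A : 𝒞} (f : N ⟶ A) :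
    ∃ (M' P' : 𝒞) (j : A ⟶ M') (d' : M' ⟶ P') (g : M ⟶ M') (r : P' ⟶ P) (s : P ⟶ P'),
      E.ses j d' ∧ IsPushout i f g j ∧ r ≫ s = 𝟙 P' := by
  obtain ⟨M', j, g, ⟨P', d', hd'⟩, hpo⟩ := E.pushout_infl h f
  have hw : i ≫ d = f ≫ (0 : A ⟶ P) := by rw [E.comp_zero h, Limits.comp_zero]
  obtain ⟨r, hr, -⟩ := E.is_cokernel hd' (hpo.desc d 0 hw) (hpo.inr_desc _ _ _)
  obtain ⟨s, hs, -⟩ := E.is_cokernel h (g ≫ d')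
    (by rw [← Category.assoc, hpo.w, Category.assoc, E.comp_zero hd', Limits.comp_zero])
  refine ⟨M', P', j, d', g, r, s, hd', hpo, (E.epi_of_ses hd').left_cancellation _ _ ?_⟩
  apply hpo.hom_ext
  · simp [reassoc_of% hr, hs]
  · simp [reassoc_of% hr, E.comp_zero hd']

lemma exists_lift_of_ext1Zero (h : E.ses i d) {V : Set 𝒞} (hV : ClosedUnderSummands V)
    (hN : N ∈ V) {A : 𝒞} (hA : ∀ N' ∈ V, E.Ext1Zero A N') (g : A ⟶ P) :
    ∃ l : A ⟶ M, l ≫ d = g := by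
  obtain ⟨M', N', j, d', g', r, s, hj, hpb, hrs⟩ := E.exists_pullback_ses_kernel_retract h g
  obtain ⟨ρ, hρ⟩ := hA N' (hV r s hrs hN) j d' hj
  obtain ⟨σ, hσ⟩ := E.exists_section_of_retraction hj hρ
  exact ⟨σ ≫ g', by rw [Category.assoc, ← hpb.w, reassoc_of% hσ]⟩

lemma exists_extend_of_ext1Zero (h : E.ses i d) {S : Set 𝒞} (hS : ClosedUnderSummands S)
    (hP : P ∈ S) {A : 𝒞} (hA : ∀ P' ∈ S, E.Ext1Zero P' A) (g : N ⟶ A) :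
    ∃ e : M ⟶ A, i ≫ e = g := by
  obtain ⟨M', P', j, d', g', r, s, hj, hpo, hrs⟩ := E.exists_pushout_ses_cokernel_retract h g
  obtain ⟨ρ, hρ⟩ := hA P' (hS r s hrs hP) j d' hj
  exact ⟨g' ≫ ρ, by rw [reassoc_of% hpo.w, hρ, Category.comp_id]⟩

lemma ext1Zero_biprod_left [HasBinaryBiproducts 𝒞] {V : Set 𝒞} (hV : ClosedUnderSummands V)
    {X Y : 𝒞} (hX : ∀ N ∈ V, E.Ext1Zero X N) (hY : ∀ N ∈ V, E.Ext1Zero Y N) {N : 𝒞} (hN : N ∈ V) :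
    E.Ext1Zero (X ⊞ Y) N := by
  intro M i d h
  obtain ⟨sX, hsX⟩ := E.exists_lift_of_ext1Zero h hV hN hX biprod.inl
  obtain ⟨sY, hsY⟩ := E.exists_lift_of_ext1Zero h hV hN hY biprod.inr
  exact E.exists_retraction_of_section h (σ := biprod.desc sX sY) (by ext <;> simp [hsX, hsY])

lemma ext1Zero_biprod_right [HasBinaryBiproducts 𝒞] {S : Set 𝒞} (hS : ClosedUnderSummands S)
    {X Y : 𝒞} (hX : ∀ A ∈ S, E.Ext1Zero A X) (hY : ∀ A ∈ S, E.Ext1Zero A Y) {A : 𝒞} (hA : A ∈ S) :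
    E.Ext1Zero A (X ⊞ Y) := by
  intro M i d h
  obtain ⟨eX, heX⟩ := E.exists_extend_of_ext1Zero h hS hA hX biprod.fst
  obtain ⟨eY, heY⟩ := E.exists_extend_of_ext1Zero h hS hA hY biprod.snd
  exact ⟨biprod.lift eX eY, by ext <;> simp [heX, heY]⟩

end ExactStructure

namespace IsCotorsionPair

variable {E : ExactStructure 𝒞} {U V : Set 𝒞} (hUV : IsCotorsionPair E U V)
include hUV

lemma mem_left_of_ext1Zero {X : 𝒞} (hX : ∀ N ∈ V, E.Ext1Zero X N) : X ∈ U := by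
  obtain ⟨V₀, U₀, i, d, hV₀, hU₀, h⟩ := hUV.approx_left X
  obtain ⟨r, hr⟩ := hX V₀ hV₀ i d h
  obtain ⟨σ, hσ⟩ := E.exists_section_of_retraction h hr
  exact hUV.summands_left σ d hσ hU₀

lemma mem_right_of_ext1Zero {X : 𝒞} (hX : ∀ A ∈ U, E.Ext1Zero A X) : X ∈ V := by
  obtain ⟨V₀, U₀, i, d, hV₀, hU₀, h⟩ := hUV.approx_right X
  obtain ⟨r, hr⟩ := hX U₀ hU₀ i d h
  exact hUV.summands_right i r hr hV₀

lemma biprod_mem_left [HasBinaryBiproducts 𝒞] {X Y : 𝒞} (hX : X ∈ U) (hY : Y ∈ U) :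
    (X ⊞ Y) ∈ U :=
  hUV.mem_left_of_ext1Zero fun _ ↦ E.ext1Zero_biprod_left hUV.summands_right
    (fun _ hN ↦ hUV.ext1 hX hN) (fun _ hN ↦ hUV.ext1 hY hN)

lemma biprod_mem_right [HasBinaryBiproducts 𝒞] {X Y : 𝒞} (hX : X ∈ V) (hY : Y ∈ V) :
    (X ⊞ Y) ∈ V :=
  hUV.mem_right_of_ext1Zero fun _ ↦ E.ext1Zero_biprod_right hUV.summands_left
    (fun _ hA ↦ hUV.ext1 hA hX) (fun _ hA ↦ hUV.ext1 hA hY)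

lemma exists_lift {N M P A : 𝒞} {i : N ⟶ M} {d : M ⟶ P} (h : E.ses i d) (hN : N ∈ V)
    (hA : A ∈ U) (g : A ⟶ P) : ∃ l : A ⟶ M, l ≫ d = g :=
  E.exists_lift_of_ext1Zero h hUV.summands_right hN (fun _ ↦ hUV.ext1 hA) g

lemma exists_extend {N M P A : 𝒞} {i : N ⟶ M} {d : M ⟶ P} (h : E.ses i d) (hP : P ∈ U)
    (hA : A ∈ V) (g : N ⟶ A) : ∃ e : M ⟶ A, i ≫ e = g :=
  E.exists_extend_of_ext1Zero h hUV.summands_left hP (fun _ hP' ↦ hUV.ext1 hP' hA) g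

end IsCotorsionPair

lemma FactorsThru.add [HasBinaryBiproducts 𝒞] {W : Set 𝒞}
    (hW : ∀ ⦃X Y : 𝒞⦄, X ∈ W → Y ∈ W → (X ⊞ Y) ∈ W)
    {X Y : 𝒞} {f g : X ⟶ Y} (hf : FactorsThru W f) (hg : FactorsThru W g) :
    FactorsThru W (f + g) := by
  obtain ⟨Z, a, b, hZ, rfl⟩ := hf
  obtain ⟨Z', a', b', hZ', rfl⟩ := hg
  exact ⟨Z ⊞ Z', biprod.lift a a', biprod.desc b b', hW hZ hZ', by simp⟩

lemma exists_approx_of_mem_bPlus {E : ExactStructure 𝒞} {U V W : Set 𝒞}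
    (hUV : IsCotorsionPair E U V) {Y : 𝒞} (hY : Y ∈ BPlus E V W) :
    ∃ (W' : 𝒞) (p : W' ⟶ Y), W' ∈ W ∧
      ∀ ⦃X : 𝒞⦄, X ∈ U → ∀ g : X ⟶ Y, ∃ l : X ⟶ W', l ≫ p = g := by
  obtain ⟨V', W', i, p, hV', hW', h⟩ := hY
  exact ⟨W', p, hW', fun _ hX g ↦ hUV.exists_lift h hV' hX g⟩

end

theorem coreflection_hom_bijective_general
    (E : ExactStructure C)
    {S T U V : Set C} (hST : IsCotorsionPair E S T) (hUV : IsCotorsionPair E U V)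
    (hSU : S ⊆ U)
    {B UB TU SU Bp : C}
    (d : UB ⟶ B) (u : UB ⟶ TU) (sU : TU ⟶ SU)
    (t : TU ⟶ Bp) (bp : B ⟶ Bp) (sp : Bp ⟶ SU)
    (hUB : UB ∈ U)
    (h2 : E.ses u sU) (hSUmem : SU ∈ S)
    (h3 : E.ses bp sp) (hPO : IsPushout u d t bp)
    {Y : C} (hY : Y ∈ BPlus E V (T ∩ U)) :
    (∀ y : B ⟶ Y, ∃ q : Bp ⟶ Y, bp ≫ q = y) ∧
    (∀ q q' : Bp ⟶ Y,
      FactorsThru (T ∩ U) (bp ≫ q - bp ≫ q') → FactorsThru (T ∩ U) (q - q')) := by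
  obtain ⟨W', p, hW', hlift⟩ := exists_approx_of_mem_bPlus hUV hY
  refine ⟨fun y ↦ ?_, fun q q' ⟨Z, a, b, hZ, hab⟩ ↦ ?_⟩
  · obtain ⟨m, hm⟩ := hlift hUB (d ≫ y)
    obtain ⟨z, hz⟩ := hST.exists_extend h2 hSUmem hW'.1 m
    exact ⟨hPO.desc (z ≫ p) y (by rw [reassoc_of% hz, hm]), hPO.inr_desc _ _ _⟩
  · obtain ⟨ea, hea⟩ := hST.exists_extend h3 hSUmem hZ.1 a
    obtain ⟨k, hk, -⟩ := E.is_cokernel h3 (q - q' - ea ≫ b)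
      (by rw [Preadditive.comp_sub, reassoc_of% hea, hab, Preadditive.comp_sub, sub_self])
    obtain ⟨l, hl⟩ := hlift (hSU hSUmem) k
    have hWbiprod : ∀ ⦃X Y : C⦄, X ∈ T ∩ U → Y ∈ T ∩ U → (X ⊞ Y) ∈ T ∩ U := fun _ _ hX hY ↦
      ⟨hST.biprod_mem_right hX.1 hY.1, hUV.biprod_mem_left hX.2 hY.2⟩
    have hsplit : q - q' = ea ≫ b + (sp ≫ l) ≫ p := by
      rw [Category.assoc, hl, hk, add_sub_cancel]
    rw [hsplit]
    exact FactorsThru.add hWbiprod ⟨Z, ea, b, hZ, rfl⟩ ⟨W', sp ≫ l, p, hW', rfl⟩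

/-- for the coreflection `b⁺ : B → B⁺` and any `Y ∈ B⁺`, composition with `b⁺`
is surjective on `Hom(-,Y)` and bijective on `Hom(-,Y)` in the quotient category `B/W`. -/
theorem coreflection_hom_bijective
    (E : ExactStructure C) (hP : E.EnoughProj) (hI : E.EnoughInj)
    {S T U V : Set C} (hST : IsCotorsionPair E S T) (hUV : IsCotorsionPair E U V)
    (hSU : S ⊆ U)
    {B VB UB TU SU Bp : C}
    (vb : VB ⟶ UB) (d : UB ⟶ B) (u : UB ⟶ TU) (sU : TU ⟶ SU)
    (t : TU ⟶ Bp) (bp : B ⟶ Bp) (sp : Bp ⟶ SU)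
    (h1 : E.ses vb d) (hVB : VB ∈ V) (hUB : UB ∈ U)
    (h2 : E.ses u sU) (hTU : TU ∈ T ∩ U) (hSUmem : SU ∈ S)
    (h3 : E.ses bp sp) (hPO : IsPushout u d t bp)
    {Y : C} (hY : Y ∈ BPlus E V (T ∩ U)) :
    (∀ y : B ⟶ Y, ∃ q : Bp ⟶ Y, bp ≫ q = y) ∧
    (∀ q q' : Bp ⟶ Y,
      FactorsThru (T ∩ U) (bp ≫ q - bp ≫ q') → FactorsThru (T ∩ U) (q - q')) :=
  coreflection_hom_bijective_general E hST hUV hSU d u sU t bp sp hUB h2 hSUmem h3 hPO hY
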